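/- Let (F,θ) be an ID-field of characteristic p > 0 and (R,θ_R) an ID-ring extension of F which is an integral domain. Let ℓ ∈ ℕ, set J_ℓ := { j ∈ ℕ^m \ {0} : j_i < p^ℓ for all i } and F_ℓ := ∩_{j∈J_ℓ} ker(θ^{(j)}) ⊆ F. Suppose Ỹ ∈ GL_n(R) and Ã_k ∈ M_n(F) (k ∈ ℕ^m) satisfy θ_R^{(k)}(Ỹ) = Ã_k·Ỹ (entrywise) for all k ∈ ℕ^m, and θ_R^{(j)}(Ỹ) = 0 for all j ∈ J_ℓ. Then for every k ∈ ℕ^m: (a) Ã_k = 0 unless every coordinate of k is divisible by p^ℓ, and (b) all entries of Ã_k lie in F_ℓ. (That is, Ã := Σ_k Ã_k T^k lies in GL_n(F_ℓ[[T_1^{p^ℓ},…,T_m^{p^ℓ}]]).) -/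

import Mathlib

open scoped TensorProduct

/-- `binom(i+j, i)` for multi-indices: `∏ μ, (i μ + j μ).choose (i μ)`. -/
def multiChoose {m : ℕ} (i j : Fin m →₀ ℕ) : ℕ :=
  ∏ μ : Fin m, Nat.choose (i μ + j μ) (i μ)

/-- An `m`-variate iterative derivation on a commutative ring `R`: a ring homomorphism
`θ : R → R[[T_1,…,T_m]]`, written `θ(r) = Σ_k θ^{(k)}(r)·T^k`, with `θ^{(0)} = id` and
`θ^{(i)} ∘ θ^{(j)} = binom(i+j,i)·θ^{(i+j)}` for all multi-indices `i, j`. -/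
structure IterativeDerivation (m : ℕ) (R : Type*) [CommRing R] where
  toRingHom : R →+* MvPowerSeries (Fin m) R
  coeff_zero : ∀ r : R, MvPowerSeries.coeff 0 (toRingHom r) = r
  iterate : ∀ (i j : Fin m →₀ ℕ) (r : R),
    MvPowerSeries.coeff i (toRingHom (MvPowerSeries.coeff j (toRingHom r))) =
      multiChoose i j • MvPowerSeries.coeff (i + j) (toRingHom r)

namespace IterativeDerivation

/-- The coefficient maps `θ^{(k)} : R → R` of an iterative derivation. -/
noncomputable def D {m : ℕ} {R : Type*} [CommRing R] (θ : IterativeDerivation m R)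
    (k : Fin m →₀ ℕ) (r : R) : R :=
  MvPowerSeries.coeff k (θ.toRingHom r)

end IterativeDerivation

/-- An ID-ring extension: the iterative derivation `θR` on `R` restricts to `θF` on `F`
(via the algebra map). -/
def IterativeDerivation.Extends {m : ℕ} {F R : Type*} [CommRing F] [CommRing R] [Algebra F R]
    (θF : IterativeDerivation m F) (θR : IterativeDerivation m R) : Prop :=
  ∀ (k : Fin m →₀ ℕ) (f : F), θR.D k (algebraMap F R f) = algebraMap F R (θF.D k f)

/-- `R` is ID-simple: no nontrivial ideals stable under all the `θ^{(k)}`. -/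
def IterativeDerivation.IDSimple {m : ℕ} {R : Type*} [CommRing R]
    (θ : IterativeDerivation m R) : Prop :=
  ∀ I : Ideal R, (∀ (k : Fin m →₀ ℕ), ∀ x ∈ I, θ.D k x ∈ I) → I = ⊥ ∨ I = ⊤

/-- The coefficient matrices `A_k` of an iterative differential equation `θ(y) = A·y`
over `(F, θ)`: `A_0 = 1` and
`binom(k+l,l)·A_{k+l} = Σ_{i+j=l} θ^{(i)}(A_k)·A_j` for all `k, l`. -/
def IsIDE {m n : ℕ} {F : Type*} [Field F] (θ : IterativeDerivation m F)
    (A : (Fin m →₀ ℕ) → Matrix (Fin n) (Fin n) F) : Prop :=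
  A 0 = 1 ∧
  ∀ k l : Fin m →₀ ℕ,
    multiChoose l k • A (k + l) =
      ∑ ij ∈ Finset.HasAntidiagonal.antidiagonal l, (A k).map (θ.D ij.1) * A ij.2

/-- `Y ∈ GL_n(R)` is a fundamental solution matrix for the IDE `θ(y) = A·y`:
`θ^{(k)}(Y) = A_k·Y` (entrywise) for all `k`. -/
def IsFundamentalMatrix {m n : ℕ} {F R : Type*} [Field F] [CommRing R] [Algebra F R]
    (θR : IterativeDerivation m R) (A : (Fin m →₀ ℕ) → Matrix (Fin n) (Fin n) F)
    (Y : Matrix (Fin n) (Fin n) R) : Prop :=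
  IsUnit Y.det ∧
  ∀ k : Fin m →₀ ℕ, Y.map (θR.D k) = (A k).map (algebraMap F R) * Y

/-- Condition (4) of a PPV-ring: the constants of `R` are exactly (the images of) the
constants of `F`. -/
def ConstantsEq {m : ℕ} {F R : Type*} [CommRing F] [CommRing R] [Algebra F R]
    (θF : IterativeDerivation m F) (θR : IterativeDerivation m R) : Prop :=
  ∀ r : R, (∀ k : Fin m →₀ ℕ, k ≠ 0 → θR.D k r = 0) →
    ∃ f : F, (∀ k : Fin m →₀ ℕ, k ≠ 0 → θF.D k f = 0) ∧ algebraMap F R f = r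

/-- `(R, θR)` is a pseudo Picard–Vessiot ring over `(F, θF)` for the IDE given by `A`:
it is ID-simple, has a fundamental solution matrix `Y` which together with `det(Y)⁻¹`
generates `R` as an `F`-algebra, and has the same constants as `F`. -/
def IsPPVRing {m n : ℕ} {F R : Type*} [Field F] [CommRing R] [Algebra F R]
    (θF : IterativeDerivation m F) (θR : IterativeDerivation m R)
    (A : (Fin m →₀ ℕ) → Matrix (Fin n) (Fin n) F) : Prop :=
  θF.Extends θR ∧ θR.IDSimple ∧
  (∃ Y : Matrix (Fin n) (Fin n) R, IsFundamentalMatrix θR A Y ∧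
    Algebra.adjoin F
      ((Set.range fun ij : Fin n × Fin n => Y ij.1 ij.2) ∪ {Ring.inverse Y.det}) = ⊤) ∧
  ConstantsEq θF θR

/-- The index set `J_ℓ = { j ∈ ℕ^m \ {0} : j_i < p^ℓ for all i }`. -/
def Jset (m p ℓ : ℕ) : Set (Fin m →₀ ℕ) :=
  {j : Fin m →₀ ℕ | j ≠ 0 ∧ ∀ i : Fin m, j i < p ^ ℓ}

/-!
In characteristic `p`, Lucas's theorem gives `binom(k, k mod p^ℓ) ≡ 1 (mod p)`, so
`θ^{(k)} = θ^{(k - j)} ∘ θ^{(j)}` for `j = k mod p^ℓ` (componentwise). Hence `θ^{(j)}(Ỹ) = 0` for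
`j ∈ J_ℓ` forces `θ^{(k)}(Ỹ) = 0` unless `p^ℓ ∣ k`, and then `Ã_k = θ^{(k)}(Ỹ)·Ỹ⁻¹ = 0`.
If `p^ℓ ∣ k` and `j ∈ J_ℓ`, the Leibniz rule, together with `θ^{(i)}(Ỹ) = 0` for `0 < i ≤ j`,
gives `θ^{(j)}(Ã_k)·Ỹ = θ^{(j)}(θ^{(k)}(Ỹ))`, a multiple of `θ^{(j+k)}(Ỹ) = 0` since `p^ℓ ∤ j + k`.
-/

theorem Nat.choose_mod_prime_pow_modEq_one {p : ℕ} (hp : p.Prime) (ℓ n : ℕ) :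
    n.choose (n % p ^ ℓ) ≡ 1 [MOD p] := by
  have : Fact p.Prime := ⟨hp⟩
  induction ℓ generalizing n with
  | zero => rw [pow_zero, Nat.mod_one, Nat.choose_zero_right]
  | succ ℓ ih =>
    calc n.choose (n % p ^ (ℓ + 1))
        ≡ (n % p).choose (n % p ^ (ℓ + 1) % p) * (n / p).choose (n % p ^ (ℓ + 1) / p) [MOD p] :=
          Choose.choose_modEq_choose_mod_mul_choose_div_nat
      _ = (n / p).choose (n / p % p ^ ℓ) := by
          rw [Nat.mod_mod_of_dvd _ (dvd_pow_self p ℓ.succ_ne_zero), Nat.choose_self, one_mul,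
            pow_succ', Nat.mod_mul_right_div_self]
      _ ≡ 1 [MOD p] := ih (n / p)

theorem Matrix.eq_zero_of_map_mul_eq_zero {n α R : Type*} [Fintype n] [DecidableEq n] [Zero α]
    [CommRing R] {f : α → R} (hf : Function.Injective f) (hf0 : f 0 = 0)
    {M : Matrix n n α} {Y : Matrix n n R} (hY : IsUnit Y.det) (h : M.map f * Y = 0) : M = 0 :=
  Matrix.map_injective hf <| show M.map f = (0 : Matrix n n α).map f by
    rw [Matrix.map_zero f hf0]
    exact ((Y.isUnit_iff_isUnit_det).mpr hY).mul_right_cancel (by rw [h, zero_mul])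

section Jset

variable {m p ℓ : ℕ}

theorem mapRange_mod_mem_Jset (hp : p ≠ 0) {k : Fin m →₀ ℕ} (hk : ¬ ∀ μ, p ^ ℓ ∣ k μ) :
    k.mapRange (· % p ^ ℓ) (Nat.zero_mod _) ∈ Jset m p ℓ := by
  refine ⟨fun h0 => hk fun μ => Nat.dvd_of_mod_eq_zero ?_, fun μ => Nat.mod_lt _ ?_⟩
  · simpa using DFunLike.congr_fun h0 μ
  · positivity

theorem mem_Jset_of_le {i j : Fin m →₀ ℕ} (hi : i ≠ 0) (hij : i ≤ j) (hj : j ∈ Jset m p ℓ) :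
    i ∈ Jset m p ℓ :=
  ⟨hi, fun μ => (hij μ).trans_lt (hj.2 μ)⟩

theorem not_forall_dvd_add_of_mem_Jset {j k : Fin m →₀ ℕ} (hj : j ∈ Jset m p ℓ)
    (hk : ∀ μ, p ^ ℓ ∣ k μ) : ¬ ∀ μ, p ^ ℓ ∣ (j + k) μ := by
  intro hjk
  obtain ⟨μ, hμ⟩ := Finsupp.ne_iff.mp hj.1
  have hdvd : p ^ ℓ ∣ j μ := (Nat.dvd_add_right (hk μ)).mp (by simpa [add_comm] using hjk μ)
  exact (Nat.le_of_dvd (Nat.pos_of_ne_zero hμ) hdvd).not_gt (hj.2 μ)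

end Jset

theorem multiChoose_sub_mapRange_mod_eq_one {m : ℕ} (R : Type*) [CommRing R] {p : ℕ} [CharP R p] (hp : p.Prime) (ℓ : ℕ)
    (k : Fin m →₀ ℕ) :
    ((multiChoose (k - k.mapRange (· % p ^ ℓ) (Nat.zero_mod _))
      (k.mapRange (· % p ^ ℓ) (Nat.zero_mod _)) : ℕ) : R) = 1 := by
  unfold multiChoose
  push_cast
  refine Finset.prod_eq_one fun μ _ => ?_
  simp only [Pi.sub_apply, Finsupp.mapRange_apply]
  rw [Nat.sub_add_cancel (Nat.mod_le _ _), Nat.choose_symm (Nat.mod_le _ _)]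
  simpa using CharP.natCast_eq_natCast' R p (Nat.choose_mod_prime_pow_modEq_one hp ℓ (k μ))

namespace IterativeDerivation

variable {m : ℕ} {R : Type*} [CommRing R] (θ : IterativeDerivation m R)

@[simp]
theorem D_zero_index (r : R) : θ.D 0 r = r := θ.coeff_zero r

@[simp]
theorem D_zero (k : Fin m →₀ ℕ) : θ.D k 0 = 0 := by simp [D]

theorem D_sum {ι : Type*} (k : Fin m →₀ ℕ) (s : Finset ι) (f : ι → R) :
    θ.D k (∑ c ∈ s, f c) = ∑ c ∈ s, θ.D k (f c) := by
  simp [D]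

theorem D_mul (k : Fin m →₀ ℕ) (x y : R) :
    θ.D k (x * y) = ∑ ij ∈ Finset.HasAntidiagonal.antidiagonal k, θ.D ij.1 x * θ.D ij.2 y := by
  simp [D, MvPowerSeries.coeff_mul]

theorem D_D (i j : Fin m →₀ ℕ) (r : R) : θ.D i (θ.D j r) = multiChoose i j • θ.D (i + j) r :=
  θ.iterate i j r

theorem D_mul_of_D_eq_zero (j : Fin m →₀ ℕ) (x y : R)
    (hy : ∀ i ≤ j, i ≠ 0 → θ.D i y = 0) : θ.D j (x * y) = θ.D j x * y := by
  rw [D_mul, Finset.sum_eq_single (j, 0)]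
  · rw [D_zero_index]
  · rintro ⟨a, b⟩ hab hne
    rw [Finset.HasAntidiagonal.mem_antidiagonal] at hab
    have hb : b ≠ 0 := by
      rintro rfl
      exact hne (by simpa using hab)
    rw [hy b (hab ▸ le_add_self) hb, mul_zero]
  · simp

theorem D_eq_zero_of_not_forall_dvd {p ℓ : ℕ} [CharP R p] (hp : p.Prime) {r : R}
    (hr : ∀ j ∈ Jset m p ℓ, θ.D j r = 0) {k : Fin m →₀ ℕ} (hk : ¬ ∀ μ, p ^ ℓ ∣ k μ) :
    θ.D k r = 0 := by
  set j := k.mapRange (· % p ^ ℓ) (Nat.zero_mod _)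
  have hjk : j ≤ k := fun μ => Nat.mod_le _ _
  have hone : (multiChoose (k - j) j : R) = 1 := multiChoose_sub_mapRange_mod_eq_one R hp ℓ k
  calc θ.D k r = multiChoose (k - j) j • θ.D (k - j + j) r := by
        rw [tsub_add_cancel_of_le hjk, nsmul_eq_mul, hone, one_mul]
    _ = θ.D (k - j) (θ.D j r) := (θ.D_D _ _ r).symm
    _ = 0 := by rw [hr j (mapRange_mod_mem_Jset hp.ne_zero hk), D_zero]

section Matrix

variable {l n o : Type*}

theorem map_D_map_D (Y : Matrix n o R) (i j : Fin m →₀ ℕ) :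
    (Y.map (θ.D j)).map (θ.D i) = multiChoose i j • Y.map (θ.D (i + j)) := by
  ext a b
  exact θ.D_D i j (Y a b)

theorem map_D_mul_of_map_D_eq_zero [Fintype n] (M : Matrix l n R) (Y : Matrix n o R) (j : Fin m →₀ ℕ)
    (hY : ∀ i ≤ j, i ≠ 0 → Y.map (θ.D i) = 0) : (M * Y).map (θ.D j) = M.map (θ.D j) * Y := by
  ext a b
  simp only [Matrix.map_apply, Matrix.mul_apply, D_sum]
  exact Finset.sum_congr rfl fun c _ =>
    θ.D_mul_of_D_eq_zero j _ _ fun i hij hi => congr_fun₂ (hY i hij hi) c b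

theorem Extends.map_D_map_algebraMap {F : Type*} [CommRing F] [Algebra F R]
    {θF : IterativeDerivation m F} (hext : θF.Extends θ) (M : Matrix l o F) (j : Fin m →₀ ℕ) :
    (M.map (algebraMap F R)).map (θ.D j) = (M.map (θF.D j)).map (algebraMap F R) := by
  ext a b
  exact hext j (M a b)

end Matrix

end IterativeDerivation

/-- Let `(R, θR)` be an ID-domain extension of the ID-field `(F, θ)` of characteristic
`p > 0`. Suppose `Ỹ ∈ GL_n(R)` and matrices `Ã_k` over `F` satisfy
`θR^{(k)}(Ỹ) = Ã_k·Ỹ` for all `k` and `θR^{(j)}(Ỹ) = 0` for all `j ∈ J_ℓ`. Then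
`Ã_k = 0` unless all coordinates of `k` are divisible by `p^ℓ`, and all entries of the
`Ã_k` lie in `F_ℓ`; i.e. `Ã ∈ GL_n(F_ℓ[[T_1^{p^ℓ},…,T_m^{p^ℓ}]])`. -/
theorem twisted_IDE_coeffs_in_kernel_field
    (m n p ℓ : ℕ) (hp : p.Prime)
    (F R : Type) [Field F] [CharP F p] [CommRing R] [IsDomain R] [Algebra F R]
    (θF : IterativeDerivation m F) (θR : IterativeDerivation m R)
    (hext : θF.Extends θR)
    (Ytil : Matrix (Fin n) (Fin n) R) (hY : IsUnit Ytil.det)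
    (Atil : (Fin m →₀ ℕ) → Matrix (Fin n) (Fin n) F)
    (hfund : ∀ k : Fin m →₀ ℕ,
      Ytil.map (θR.D k) = (Atil k).map (algebraMap F R) * Ytil)
    (hJ : ∀ j ∈ Jset m p ℓ, Ytil.map (θR.D j) = 0) :
    (∀ k : Fin m →₀ ℕ, ¬ (∀ i : Fin m, p ^ ℓ ∣ k i) → Atil k = 0) ∧
    (∀ (k : Fin m →₀ ℕ) (a b : Fin n), ∀ j ∈ Jset m p ℓ, θF.D j (Atil k a b) = 0) := by
  have hinj := (algebraMap F R).injective
  have : CharP R p := charP_of_injective_algebraMap hinj p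
  have hzero : ∀ k : Fin m →₀ ℕ, ¬ (∀ i, p ^ ℓ ∣ k i) → Ytil.map (θR.D k) = 0 :=
    fun k hk => Matrix.ext fun a b =>
      θR.D_eq_zero_of_not_forall_dvd hp (fun j hj => congr_fun₂ (hJ j hj) a b) hk
  have hA : ∀ k : Fin m →₀ ℕ, ¬ (∀ i, p ^ ℓ ∣ k i) → Atil k = 0 := fun k hk =>
    Matrix.eq_zero_of_map_mul_eq_zero hinj (map_zero _) hY (by rw [← hfund, hzero k hk])
  refine ⟨hA, fun k a b j hj => ?_⟩
  by_cases hk : ∀ i, p ^ ℓ ∣ k i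
  · have hDA : (Atil k).map (θF.D j) = 0 := by
      refine Matrix.eq_zero_of_map_mul_eq_zero hinj (map_zero _) hY ?_
      rw [← hext.map_D_map_algebraMap, ← θR.map_D_mul_of_map_D_eq_zero _ _ j
          (fun i hij hi => hJ i (mem_Jset_of_le hi hij hj)), ← hfund, θR.map_D_map_D,
        hzero _ (not_forall_dvd_add_of_mem_Jset hj hk), smul_zero]
    exact congr_fun₂ hDA a b
  · rw [hA k hk, Matrix.zero_apply, θF.D_zero]
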